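/- With the same notation (ψ(u) = (u−1)/(u+1), ν_θ = θ·μ, ν_{θ'} = θ'·μ finite measures with nonnegative densities θ, θ' w.r.t. a σ-finite μ, H² the squared Hellinger distance between finite measures), for every finite measure ν on (X,A): ∫_X ψ²(√(θ'/θ)) dν ≤ 4[ H²(ν, ν_θ) + H²(ν, ν_{θ'}) ]. -/
import Mathlib


open MeasureTheory

/-- Squared Hellinger distance between finite measures, computed with the dominating
measure `ν + ν'`. -/
noncomputable def Hsq {X : Type*} [MeasurableSpace X] (ν ν' : Measure X) : ℝ :=
  (1 / 2) * ∫ x,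
    (Real.sqrt ((ν.rnDeriv (ν + ν') x).toReal) -
      Real.sqrt ((ν'.rnDeriv (ν + ν') x).toReal)) ^ 2 ∂(ν + ν')

/-- `ψ(√(θ'/θ))` with the conventions `ψ(∞) = 1` and `0/0 = 1` (so `ψ(√(0/0)) = ψ(1) = 0`). -/
noncomputable def psiSqrtRatio {X : Type*} (θ θ' : X → ℝ) (x : X) : ℝ :=
  if θ x = 0 then (if θ' x = 0 then 0 else 1)
  else (Real.sqrt (θ' x / θ x) - 1) / (Real.sqrt (θ' x / θ x) + 1)

lemma psi_sq_le_one {X : Type*} (θ θ' : X → ℝ) (x : X) :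
    (psiSqrtRatio θ θ' x) ^ 2 ≤ 1 := by
  rw [psiSqrtRatio]
  split_ifs with h1 h2
  · norm_num
  · norm_num
  · have hu : 0 ≤ Real.sqrt (θ' x / θ x) := Real.sqrt_nonneg _
    rw [div_pow, div_le_one (by positivity)]
    nlinarith

lemma psi_measurable {X : Type*} [MeasurableSpace X] {θ θ' : X → ℝ}
    (hθm : Measurable θ) (hθ'm : Measurable θ') :
    Measurable (psiSqrtRatio θ θ') := by
  unfold psiSqrtRatio
  refine Measurable.ite (hθm (measurableSet_singleton 0)) ?_ ?_
  · exact Measurable.ite (hθ'm (measurableSet_singleton 0)) measurable_const measurable_const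
  · exact ((hθ'm.div hθm).sqrt.sub measurable_const).div
      ((hθ'm.div hθm).sqrt.add measurable_const)

/-- The key pointwise inequality. -/
lemma psi_key {X : Type*} (θ θ' : X → ℝ) (x : X) (ha : 0 ≤ θ x) (hb : 0 ≤ θ' x)
    {r h : ℝ} (hr : 0 ≤ r) (hh : 0 ≤ h) :
    r * (psiSqrtRatio θ θ' x) ^ 2 ≤
      2 * ((Real.sqrt r - Real.sqrt (θ x * h)) ^ 2 +
        (Real.sqrt r - Real.sqrt (θ' x * h)) ^ 2) := by
  have hψ1 := psi_sq_le_one θ θ' x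
  have hψ0 : 0 ≤ (psiSqrtRatio θ θ' x) ^ 2 := sq_nonneg _
  set ψ := psiSqrtRatio θ θ' x with hψdef
  set ρ := Real.sqrt r with hρdef
  set s := Real.sqrt (θ x * h) with hsdef
  set t := Real.sqrt (θ' x * h) with htdef
  have hρ2 : ρ ^ 2 = r := Real.sq_sqrt hr
  have hρ0 : 0 ≤ ρ := Real.sqrt_nonneg _
  have hs0 : 0 ≤ s := Real.sqrt_nonneg _
  have ht0 : 0 ≤ t := Real.sqrt_nonneg _
  by_cases hst : s + t = 0
  · have hs : s = 0 := by linarith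
    have ht : t = 0 := by linarith
    rw [hs, ht]
    nlinarith [mul_le_mul_of_nonneg_left hψ1 hr]
  · have hst' : 0 < s + t := lt_of_le_of_ne (add_nonneg hs0 ht0) (Ne.symm hst)
    have hψeq : ψ = (t - s) / (t + s) := by
      rw [hψdef, psiSqrtRatio]
      split_ifs with h1 h2
      · exfalso
        apply hst
        simp [hsdef, htdef, h1, h2]
      · have hs' : s = 0 := by rw [hsdef, h1, zero_mul, Real.sqrt_zero]
        have ht' : 0 < t := by rw [hs'] at hst'; simpa using hst'
        rw [hs', sub_zero, add_zero, div_self (ne_of_gt ht')]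
      · have ha' : 0 < θ x := lt_of_le_of_ne ha (Ne.symm h1)
        have hh' : 0 < h := by
          rcases hh.eq_or_lt with h0 | h0
          · exfalso
            apply hst
            simp [hsdef, htdef, ← h0]
          · exact h0
        have hs' : 0 < s := by
          rw [hsdef]
          exact Real.sqrt_pos.mpr (by positivity)
        have hratio : Real.sqrt (θ' x / θ x) = t / s := by
          rw [show θ' x / θ x = (θ' x * h) / (θ x * h) from
            (mul_div_mul_right _ _ (ne_of_gt hh')).symm]
          rw [htdef, hsdef, Real.sqrt_div (by positivity)]
        have hd1 : (0:ℝ) < t / s + 1 := by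
          have := div_nonneg ht0 (le_of_lt hs')
          linarith
        have hd2 : (0:ℝ) < t + s := by linarith
        rw [hratio, div_eq_div_iff (ne_of_gt hd1) (ne_of_gt hd2)]
        field_simp
    have hts : (0:ℝ) < (t + s) ^ 2 := by
      have : (0:ℝ) < t + s := by linarith
      positivity
    rw [hψeq, div_pow, ← mul_div_assoc, div_le_iff₀ hts]
    rcases le_or_gt ρ (s + t) with hc | hc
    · have e1 : (t - s) ^ 2 ≤ 2 * ((ρ - s) ^ 2 + (ρ - t) ^ 2) := by
        nlinarith [sq_nonneg (2 * ρ - s - t)]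
      have e2 : ρ ^ 2 ≤ (s + t) ^ 2 := by nlinarith
      calc r * (t - s) ^ 2 = ρ ^ 2 * (t - s) ^ 2 := by rw [hρ2]
        _ ≤ (s + t) ^ 2 * (t - s) ^ 2 := mul_le_mul_of_nonneg_right e2 (sq_nonneg _)
        _ ≤ (s + t) ^ 2 * (2 * ((ρ - s) ^ 2 + (ρ - t) ^ 2)) :=
            mul_le_mul_of_nonneg_left e1 (by positivity)
        _ = 2 * ((ρ - s) ^ 2 + (ρ - t) ^ 2) * (t + s) ^ 2 := by ring
    · have e1 : (t - s) ^ 2 ≤ (s + t) ^ 2 := by nlinarith [mul_nonneg hs0 ht0]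
      have e2 : ρ ^ 2 ≤ 2 * ((ρ - s) ^ 2 + (ρ - t) ^ 2) := by
        have h3 : 0 < 3 * ρ - s - t := by linarith
        have h4 : 0 < ρ - s - t := by linarith
        nlinarith [sq_nonneg (s - t), mul_pos h3 h4]
      calc r * (t - s) ^ 2 = ρ ^ 2 * (t - s) ^ 2 := by rw [hρ2]
        _ ≤ (2 * ((ρ - s) ^ 2 + (ρ - t) ^ 2)) * (t - s) ^ 2 :=
            mul_le_mul_of_nonneg_right e2 (sq_nonneg _)
        _ ≤ (2 * ((ρ - s) ^ 2 + (ρ - t) ^ 2)) * (s + t) ^ 2 :=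
            mul_le_mul_of_nonneg_left e1 (by positivity)
        _ = 2 * ((ρ - s) ^ 2 + (ρ - t) ^ 2) * (t + s) ^ 2 := by ring

/-- `Hsq` can be computed with any dominating measure. -/
lemma Hsq_eq_dominating {X : Type*} [MeasurableSpace X] (α β Λ : Measure X)
    [IsFiniteMeasure α] [IsFiniteMeasure β] [IsFiniteMeasure Λ] (h : α + β ≪ Λ) :
    Hsq α β = (1 / 2) * ∫ x,
      (Real.sqrt ((α.rnDeriv Λ x).toReal) - Real.sqrt ((β.rnDeriv Λ x).toReal)) ^ 2 ∂Λ := by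
  have hα : α ≪ α + β := (Measure.le_add_right le_rfl).absolutelyContinuous
  have hβ : β ≪ α + β := (Measure.le_add_left le_rfl).absolutelyContinuous
  have c1 := Measure.rnDeriv_mul_rnDeriv (κ := Λ) hα
  have c2 := Measure.rnDeriv_mul_rnDeriv (κ := Λ) hβ
  rw [Hsq]
  congr 1
  rw [← integral_rnDeriv_smul h (f := fun x =>
    (Real.sqrt ((α.rnDeriv (α + β) x).toReal) -
      Real.sqrt ((β.rnDeriv (α + β) x).toReal)) ^ 2)]
  refine integral_congr_ae ?_
  filter_upwards [c1, c2] with x h1 h2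
  simp only [smul_eq_mul]
  rw [← h1, ← h2]
  simp only [Pi.mul_apply, ENNReal.toReal_mul]
  set u := (α.rnDeriv (α + β) x).toReal
  set v := (β.rnDeriv (α + β) x).toReal
  set w := ((α + β).rnDeriv Λ x).toReal
  have hu : 0 ≤ u := ENNReal.toReal_nonneg
  have hv : 0 ≤ v := ENNReal.toReal_nonneg
  have hw : 0 ≤ w := ENNReal.toReal_nonneg
  rw [Real.sqrt_mul hu, Real.sqrt_mul hv]
  have hw2 : Real.sqrt w ^ 2 = w := Real.sq_sqrt hw
  nlinarith [hw2]

/-- For densities `θ, θ'` w.r.t. a σ-finite `μ` and any finite measure `ν`: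
`∫ ψ²(√(θ'/θ)) dν ≤ 4[H²(ν,ν_θ) + H²(ν,ν_{θ'})]`. -/
theorem stmt13 {X : Type*} [MeasurableSpace X] (μ : Measure X) [SigmaFinite μ]
    (θ θ' : X → ℝ) (hθm : Measurable θ) (hθ'm : Measurable θ')
    (hθ : ∀ x, 0 ≤ θ x) (hθ' : ∀ x, 0 ≤ θ' x)
    (hθint : Integrable θ μ) (hθ'int : Integrable θ' μ)
    (ν : Measure X) [IsFiniteMeasure ν] :
    ∫ x, (psiSqrtRatio θ θ' x) ^ 2 ∂ν ≤
      4 * (Hsq ν (μ.withDensity fun x => ENNReal.ofReal (θ x)) +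
        Hsq ν (μ.withDensity fun x => ENNReal.ofReal (θ' x))) := by
  set f : X → ENNReal := fun x => ENNReal.ofReal (θ x) with hf
  set g : X → ENNReal := fun x => ENNReal.ofReal (θ' x) with hg
  set νθ : Measure X := μ.withDensity f with hνθ
  set νθ' : Measure X := μ.withDensity g with hνθ'
  haveI : IsFiniteMeasure νθ := by
    refine isFiniteMeasure_withDensity ?_
    rw [← ofReal_integral_eq_lintegral_ofReal hθint (ae_of_all _ hθ)]
    exact ENNReal.ofReal_ne_top
  haveI : IsFiniteMeasure νθ' := by
    refine isFiniteMeasure_withDensity ?_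
    rw [← ofReal_integral_eq_lintegral_ofReal hθ'int (ae_of_all _ hθ')]
    exact ENNReal.ofReal_ne_top
  set Λ : Measure X := ν + νθ + νθ' with hΛ
  have hνΛ : ν ≪ Λ := by
    refine Measure.absolutelyContinuous_of_le ?_
    calc ν ≤ ν + νθ := Measure.le_add_right le_rfl
    _ ≤ ν + νθ + νθ' := Measure.le_add_right le_rfl
  have hσ1 : ν + νθ ≪ Λ := (Measure.le_add_right le_rfl).absolutelyContinuous
  have hσ2 : ν + νθ' ≪ Λ := by
    refine Measure.absolutelyContinuous_of_le ?_
    rw [hΛ, add_assoc, add_comm νθ νθ', ← add_assoc]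
    exact Measure.le_add_right le_rfl
  -- densities of νθ, νθ' w.r.t. Λ
  have h1 : νθ.rnDeriv Λ =ᵐ[Λ] fun x => f x * μ.rnDeriv Λ x :=
    Measure.rnDeriv_withDensity_left hθm.ennreal_ofReal.aemeasurable
      (ae_of_all _ fun x => ENNReal.ofReal_ne_top)
  have h2 : νθ'.rnDeriv Λ =ᵐ[Λ] fun x => g x * μ.rnDeriv Λ x :=
    Measure.rnDeriv_withDensity_left hθ'm.ennreal_ofReal.aemeasurable
      (ae_of_all _ fun x => ENNReal.ofReal_ne_top)
  -- rewrite the left-hand side over Λ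
  have hL : ∫ x, (psiSqrtRatio θ θ' x) ^ 2 ∂ν =
      ∫ x, (ν.rnDeriv Λ x).toReal * (psiSqrtRatio θ θ' x) ^ 2 ∂Λ := by
    rw [← integral_rnDeriv_smul hνΛ (f := fun x => (psiSqrtRatio θ θ' x) ^ 2)]
    simp only [smul_eq_mul]
  -- rewrite the Hellinger distances over Λ
  have hR1 := Hsq_eq_dominating ν νθ Λ hσ1
  have hR2 := Hsq_eq_dominating ν νθ' Λ hσ2
  set G1 : X → ℝ := fun x =>
    (Real.sqrt ((ν.rnDeriv Λ x).toReal) - Real.sqrt ((νθ.rnDeriv Λ x).toReal)) ^ 2 with hG1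
  set G2 : X → ℝ := fun x =>
    (Real.sqrt ((ν.rnDeriv Λ x).toReal) - Real.sqrt ((νθ'.rnDeriv Λ x).toReal)) ^ 2 with hG2
  -- integrability
  have iν : Integrable (fun x => (ν.rnDeriv Λ x).toReal) Λ :=
    Measure.integrable_toReal_rnDeriv
  have iθ : Integrable (fun x => (νθ.rnDeriv Λ x).toReal) Λ :=
    Measure.integrable_toReal_rnDeriv
  have iθ' : Integrable (fun x => (νθ'.rnDeriv Λ x).toReal) Λ :=
    Measure.integrable_toReal_rnDeriv
  have sqG : ∀ (ρ : Measure X), ∀ x : X,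
      ‖(Real.sqrt ((ν.rnDeriv Λ x).toReal) - Real.sqrt ((ρ.rnDeriv Λ x).toReal)) ^ 2‖ ≤
        (ν.rnDeriv Λ x).toReal + (ρ.rnDeriv Λ x).toReal := by
    intro ρ x
    rw [Real.norm_of_nonneg (sq_nonneg _)]
    have h1 : Real.sqrt ((ν.rnDeriv Λ x).toReal) ^ 2 = (ν.rnDeriv Λ x).toReal :=
      Real.sq_sqrt ENNReal.toReal_nonneg
    have h2 : Real.sqrt ((ρ.rnDeriv Λ x).toReal) ^ 2 = (ρ.rnDeriv Λ x).toReal :=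
      Real.sq_sqrt ENNReal.toReal_nonneg
    nlinarith [mul_nonneg (Real.sqrt_nonneg ((ν.rnDeriv Λ x).toReal))
      (Real.sqrt_nonneg ((ρ.rnDeriv Λ x).toReal))]
  have measG : ∀ (ρ : Measure X), AEStronglyMeasurable (fun x =>
      (Real.sqrt ((ν.rnDeriv Λ x).toReal) - Real.sqrt ((ρ.rnDeriv Λ x).toReal)) ^ 2) Λ := by
    intro ρ
    exact (((ν.measurable_rnDeriv Λ).ennreal_toReal.sqrt.sub
      (ρ.measurable_rnDeriv Λ).ennreal_toReal.sqrt).pow_const 2).aestronglyMeasurable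
  have iG1 : Integrable G1 Λ :=
    Integrable.mono' (iν.add iθ) (measG νθ) (ae_of_all _ (sqG νθ))
  have iG2 : Integrable G2 Λ :=
    Integrable.mono' (iν.add iθ') (measG νθ') (ae_of_all _ (sqG νθ'))
  have iLHS : Integrable (fun x => (ν.rnDeriv Λ x).toReal * (psiSqrtRatio θ θ' x) ^ 2) Λ := by
    refine Integrable.mono' iν ?_ (ae_of_all _ fun x => ?_)
    · exact ((ν.measurable_rnDeriv Λ).ennreal_toReal.mul
        ((psi_measurable hθm hθ'm).pow_const 2)).aestronglyMeasurable
    · rw [Real.norm_of_nonneg (mul_nonneg ENNReal.toReal_nonneg (sq_nonneg _))]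
      calc (ν.rnDeriv Λ x).toReal * (psiSqrtRatio θ θ' x) ^ 2
          ≤ (ν.rnDeriv Λ x).toReal * 1 :=
            mul_le_mul_of_nonneg_left (psi_sq_le_one θ θ' x) ENNReal.toReal_nonneg
        _ = (ν.rnDeriv Λ x).toReal := mul_one _
  -- pointwise a.e. inequality over Λ
  have hpt : (fun x => (ν.rnDeriv Λ x).toReal * (psiSqrtRatio θ θ' x) ^ 2) ≤ᵐ[Λ]
      fun x => 2 * (G1 x + G2 x) := by
    filter_upwards [h1, h2] with x hx1 hx2
    have e1 : (νθ.rnDeriv Λ x).toReal = θ x * (μ.rnDeriv Λ x).toReal := by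
      rw [hx1, ENNReal.toReal_mul, hf, ENNReal.toReal_ofReal (hθ x)]
    have e2 : (νθ'.rnDeriv Λ x).toReal = θ' x * (μ.rnDeriv Λ x).toReal := by
      rw [hx2, ENNReal.toReal_mul, hg, ENNReal.toReal_ofReal (hθ' x)]
    simp only [hG1, hG2, e1, e2]
    exact psi_key θ θ' x (hθ x) (hθ' x) ENNReal.toReal_nonneg ENNReal.toReal_nonneg
  have hmain : ∫ x, (ν.rnDeriv Λ x).toReal * (psiSqrtRatio θ θ' x) ^ 2 ∂Λ ≤
      ∫ x, 2 * (G1 x + G2 x) ∂Λ :=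
    integral_mono_ae iLHS ((iG1.add iG2).const_mul 2) hpt
  have hsum : ∫ x, 2 * (G1 x + G2 x) ∂Λ = 2 * (∫ x, G1 x ∂Λ + ∫ x, G2 x ∂Λ) := by
    rw [integral_const_mul, integral_add iG1 iG2]
  rw [hL, hR1, hR2]
  rw [hsum] at hmain
  linarith
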